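/- arXiv:1108.5062 — 2 statements merged into one kernel-verified Lean document; each statement's English description precedes it below -/
import Mathlib

section
/- If f : ℝ → ℝ is continuously differentiable, then for any two distinct non-zero infinitesimals δ and ε and any real x, st((f*(x + δ) − f*(x + ε))/(δ − ε)) = f'(x). -/
open Filter

/-- The nonstandard extension of a function `f : ℝ → ℝ` to the hyperreals,
defined componentwise on representative sequences. -/
noncomputable def nsext (f : ℝ → ℝ) (x : ℝ*) : ℝ* := Germ.map f x

/-- MVT-style choice lemma. -/
lemma exists_mvt (f f' : ℝ → ℝ) (hderiv : ∀ x : ℝ, HasDerivAt f (f' x) x) (a b : ℝ) :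
    ∃ c, min a b ≤ c ∧ c ≤ max a b ∧ f b - f a = f' c * (b - a) := by
  have hfc : Continuous f := by
    rw [continuous_iff_continuousAt]; exact fun y => (hderiv y).continuousAt
  rcases lt_trichotomy a b with h | h | h
  · obtain ⟨c, hc, hc'⟩ := exists_hasDerivAt_eq_slope f f' h hfc.continuousOn
      (fun y _ => hderiv y)
    refine ⟨c, le_trans (min_le_left _ _) hc.1.le, le_trans hc.2.le (le_max_right _ _), ?_⟩
    rw [eq_div_iff (sub_ne_zero.mpr h.ne')] at hc'
    linarith [hc']
  · exact ⟨a, le_trans (min_le_left _ _) le_rfl, le_max_left _ _, by subst h; ring⟩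
  · obtain ⟨c, hc, hc'⟩ := exists_hasDerivAt_eq_slope f f' h hfc.continuousOn
      (fun y _ => hderiv y)
    refine ⟨c, le_trans (min_le_right _ _) hc.1.le, le_trans hc.2.le (le_max_left _ _), ?_⟩
    rw [eq_div_iff (sub_ne_zero.mpr h.ne')] at hc'
    nlinarith [hc']

noncomputable def mvtpt (f f' : ℝ → ℝ) (hderiv : ∀ x : ℝ, HasDerivAt f (f' x) x) (a b : ℝ) : ℝ :=
  (exists_mvt f f' hderiv a b).choose

lemma mvtpt_spec (f f' : ℝ → ℝ) (hderiv : ∀ x : ℝ, HasDerivAt f (f' x) x) (a b : ℝ) :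
    min a b ≤ mvtpt f f' hderiv a b ∧ mvtpt f f' hderiv a b ≤ max a b ∧
      f b - f a = f' (mvtpt f f' hderiv a b) * (b - a) :=
  (exists_mvt f f' hderiv a b).choose_spec

/-- If `f : ℝ → ℝ` is continuously differentiable with derivative `f'`, then for any
two distinct non-zero infinitesimals `δ` and `ε` and any real `x`,
`st ((f*(x + δ) - f*(x + ε)) / (δ - ε)) = f' x`. -/
theorem st_difference_quotient (f f' : ℝ → ℝ)
    (hderiv : ∀ x : ℝ, HasDerivAt f (f' x) x) (hcont : Continuous f')
    (δ ε : ℝ*) (hδ : Hyperreal.Infinitesimal δ) (hε : Hyperreal.Infinitesimal ε)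
    (hδ0 : δ ≠ 0) (hε0 : ε ≠ 0) (hne : δ ≠ ε) (x : ℝ) :
    Hyperreal.st ((nsext f ((x : ℝ*) + δ) - nsext f ((x : ℝ*) + ε)) / (δ - ε)) = f' x := by

  obtain ⟨d, rfl⟩ := Hyperreal.ofSeq_surjective δ
  obtain ⟨e, rfl⟩ := Hyperreal.ofSeq_surjective ε
  set g := mvtpt f f' hderiv
  set ξ : ℝ* := Hyperreal.ofSeq (fun n => g (x + e n) (x + d n)) with hξ
  -- the key algebraic identity
  have key : nsext f ((x : ℝ*) + Hyperreal.ofSeq d) - nsext f ((x : ℝ*) + Hyperreal.ofSeq e)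
      = nsext f' ξ * (Hyperreal.ofSeq d - Hyperreal.ofSeq e) := by
    have : ∀ n, f (x + d n) - f (x + e n)
        = f' (g (x + e n) (x + d n)) * ((x + d n) - (x + e n)) :=
      fun n => (mvtpt_spec f f' hderiv (x + e n) (x + d n)).2.2
    apply Germ.coe_eq.mpr
    apply Eventually.of_forall
    intro n
    simpa using this n
  have hdiff : Hyperreal.ofSeq d - Hyperreal.ofSeq e ≠ 0 := sub_ne_zero.mpr hne
  have hst : Hyperreal.IsSt ξ x := by
    intro r hr
    have hδr := hδ r hr
    have hεr := hε r hr
    simp only [Hyperreal.coe_zero, zero_sub, zero_add] at hδr hεr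
    constructor
    · have h1 : ((x - r : ℝ) : ℝ*) < Hyperreal.ofSeq (fun n => x + e n) := by
        rw [show ((x - r : ℝ) : ℝ*) = Hyperreal.ofSeq (fun _ => x - r) from rfl,
          Hyperreal.ofSeq_lt_ofSeq]
        have := (show ((-r : ℝ) : ℝ*) < Hyperreal.ofSeq e by exact_mod_cast hεr.1)
        rw [show ((-r : ℝ) : ℝ*) = Hyperreal.ofSeq (fun _ => -r) from rfl,
          Hyperreal.ofSeq_lt_ofSeq] at this
        filter_upwards [this] with n hn; linarith
      have h2 : ((x - r : ℝ) : ℝ*) < Hyperreal.ofSeq (fun n => x + d n) := by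
        rw [show ((x - r : ℝ) : ℝ*) = Hyperreal.ofSeq (fun _ => x - r) from rfl,
          Hyperreal.ofSeq_lt_ofSeq]
        have := (show ((-r : ℝ) : ℝ*) < Hyperreal.ofSeq d by exact_mod_cast hδr.1)
        rw [show ((-r : ℝ) : ℝ*) = Hyperreal.ofSeq (fun _ => -r) from rfl,
          Hyperreal.ofSeq_lt_ofSeq] at this
        filter_upwards [this] with n hn; linarith
      rw [show ((x : ℝ*) - (r : ℝ*)) = ((x - r : ℝ) : ℝ*) by push_cast; ring,
        show ((x - r : ℝ) : ℝ*) = Hyperreal.ofSeq (fun _ => x - r) from rfl] at *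
      rw [hξ, Hyperreal.ofSeq_lt_ofSeq] at *
      filter_upwards [h1, h2] with n h1 h2
      calc x - r < min (x + e n) (x + d n) := lt_min h1 h2
        _ ≤ g (x + e n) (x + d n) := (mvtpt_spec f f' hderiv _ _).1
    · have h1 : Hyperreal.ofSeq (fun n => x + e n) < ((x + r : ℝ) : ℝ*) := by
        rw [show ((x + r : ℝ) : ℝ*) = Hyperreal.ofSeq (fun _ => x + r) from rfl,
          Hyperreal.ofSeq_lt_ofSeq]
        have := (show Hyperreal.ofSeq e < ((r : ℝ) : ℝ*) by exact_mod_cast hεr.2)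
        rw [show ((r : ℝ) : ℝ*) = Hyperreal.ofSeq (fun _ => r) from rfl,
          Hyperreal.ofSeq_lt_ofSeq] at this
        filter_upwards [this] with n hn; linarith
      have h2 : Hyperreal.ofSeq (fun n => x + d n) < ((x + r : ℝ) : ℝ*) := by
        rw [show ((x + r : ℝ) : ℝ*) = Hyperreal.ofSeq (fun _ => x + r) from rfl,
          Hyperreal.ofSeq_lt_ofSeq]
        have := (show Hyperreal.ofSeq d < ((r : ℝ) : ℝ*) by exact_mod_cast hδr.2)
        rw [show ((r : ℝ) : ℝ*) = Hyperreal.ofSeq (fun _ => r) from rfl,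
          Hyperreal.ofSeq_lt_ofSeq] at this
        filter_upwards [this] with n hn; linarith
      rw [show ((x : ℝ*) + (r : ℝ*)) = ((x + r : ℝ) : ℝ*) by push_cast; ring,
        show ((x + r : ℝ) : ℝ*) = Hyperreal.ofSeq (fun _ => x + r) from rfl] at *
      rw [hξ, Hyperreal.ofSeq_lt_ofSeq] at *
      filter_upwards [h1, h2] with n h1 h2
      calc g (x + e n) (x + d n) ≤ max (x + e n) (x + d n) := (mvtpt_spec f f' hderiv _ _).2.1
        _ < x + r := max_lt h1 h2
  have hstmap : Hyperreal.IsSt (nsext f' ξ) (f' x) := hst.map hcont.continuousAt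
  rw [key, mul_div_cancel_right₀ _ hdiff]
  exact hstmap.st_eq
end

section
/- The trace operator on the category of cpos, defined for Scott-continuous f : A × X → B × X by Tr(f)(a) = π_B(fix(x ↦ f(a, π_X(x)))) where the fixpoint is taken in B × X, yields a Scott-continuous function A → B, and this trace satisfies the yanking axiom: the trace of the symmetry γ : X × X → X × X is the identity on X. -/
section aux
variable {B X : Type*} [PartialOrder B] [PartialOrder X]

private lemma my_lub_fst {D : Set (B × X)} {u : B × X} (h : IsLUB D u) :
    IsLUB (Prod.fst '' D) u.1 := by
  constructor
  · rintro _ ⟨p, hp, rfl⟩; exact (h.1 hp).1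
  · intro v hv
    exact (h.2 (show (v, u.2) ∈ upperBounds D from fun p hp => ⟨hv ⟨p, hp, rfl⟩, (h.1 hp).2⟩)).1

private lemma my_lub_snd {D : Set (B × X)} {u : B × X} (h : IsLUB D u) :
    IsLUB (Prod.snd '' D) u.2 := by
  constructor
  · rintro _ ⟨p, hp, rfl⟩; exact (h.1 hp).2
  · intro v hv
    exact (h.2 (show (u.1, v) ∈ upperBounds D from fun p hp => ⟨(h.1 hp).1, hv ⟨p, hp, rfl⟩⟩)).2

private lemma my_lub_mk {D : Set (B × X)} {b : B} {x : X}
    (hb : IsLUB (Prod.fst '' D) b) (hx : IsLUB (Prod.snd '' D) x) :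
    IsLUB D (b, x) := by
  constructor
  · intro p hp
    exact ⟨hb.1 ⟨p, hp, rfl⟩, hx.1 ⟨p, hp, rfl⟩⟩
  · intro w hw
    refine ⟨hb.2 ?_, hx.2 ?_⟩
    · rintro _ ⟨p, hp, rfl⟩; exact (hw hp).1
    · rintro _ ⟨p, hp, rfl⟩; exact (hw hp).2

end aux

/-- The trace operator on cpos: for Scott-continuous `f : A × X → B × X`, setting
`Tr f a = π_B (fix (p ↦ f (a, π_X p)))` (where the least fixed point is taken in
`B × X`) yields a Scott-continuous function `A → B`; moreover the trace satisfies
the yanking axiom: the trace of the symmetry `γ : X × X → X × X` is the identity. -/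
theorem cpo_trace_scott_continuous_and_yanking
    {A B X : Type*} [PartialOrder A] [PartialOrder B] [PartialOrder X]
    [OrderBot A] [OrderBot B] [OrderBot X]
    (hA : ∀ D : Set A, D.Nonempty → DirectedOn (· ≤ ·) D → ∃ u, IsLUB D u)
    (hB : ∀ D : Set B, D.Nonempty → DirectedOn (· ≤ ·) D → ∃ u, IsLUB D u)
    (hX : ∀ D : Set X, D.Nonempty → DirectedOn (· ≤ ·) D → ∃ u, IsLUB D u)
    (f : A × X → B × X)
    (hf : ∀ D : Set (A × X), D.Nonempty → DirectedOn (· ≤ ·) D →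
      ∀ u, IsLUB D u → IsLUB (f '' D) (f u))
    -- `F a` is the least fixed point of `p ↦ f (a, π_X p)` in `B × X`
    (F : A → B × X)
    (hF : ∀ a : A, IsLeast {p : B × X | f (a, p.2) = p} (F a)) :
    -- the trace `a ↦ π_B (F a)` is Scott-continuous
    ((∀ a a' : A, a ≤ a' → (F a).1 ≤ (F a').1) ∧
      (∀ D : Set A, D.Nonempty → DirectedOn (· ≤ ·) D →
        ∀ u, IsLUB D u → IsLUB ((fun a => (F a).1) '' D) ((F u).1))) ∧
    -- yanking: the trace of the symmetry on `X × X` is the identity on `X`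
    (∀ G : X → X × X,
      (∀ a : X, IsLeast {p : X × X | Prod.swap (a, p.2) = p} (G a)) →
      ∀ a : X, (G a).1 = a) := by
  -- f is monotone
  have fmono : ∀ x y : A × X, x ≤ y → f x ≤ f y := by
    intro x y hxy
    have hlub : IsLUB {x, y} y := by
      constructor
      · rintro z (rfl | rfl)
        · exact hxy
        · exact le_rfl
      · intro w hw
        exact hw (by simp)
    have hdir : DirectedOn (· ≤ ·) ({x, y} : Set (A × X)) := by
      intro p hp q hq
      exact ⟨y, by simp, hlub.1 hp, hlub.1 hq⟩
    have := hf {x, y} ⟨x, by simp⟩ hdir y hlub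
    exact this.1 ⟨x, by simp, rfl⟩
  -- the product B × X is a cpo
  have hBX : ∀ D : Set (B × X), D.Nonempty → DirectedOn (· ≤ ·) D → ∃ u, IsLUB D u := by
    intro D hne hdir
    obtain ⟨b, hb⟩ := hB (Prod.fst '' D) (hne.image _) (by
      rintro _ ⟨p, hp, rfl⟩ _ ⟨q, hq, rfl⟩
      obtain ⟨r, hr, hpr, hqr⟩ := hdir p hp q hq
      exact ⟨r.1, ⟨r, hr, rfl⟩, hpr.1, hqr.1⟩)
    obtain ⟨x, hx⟩ := hX (Prod.snd '' D) (hne.image _) (by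
      rintro _ ⟨p, hp, rfl⟩ _ ⟨q, hq, rfl⟩
      obtain ⟨r, hr, hpr, hqr⟩ := hdir p hp q hq
      exact ⟨r.2, ⟨r, hr, rfl⟩, hpr.2, hqr.2⟩)
    exact ⟨(b, x), my_lub_mk hb hx⟩
  -- F is monotone
  have Fmono : ∀ a a' : A, a ≤ a' → F a ≤ F a' := by
    intro a a' haa
    set g : B × X → B × X := fun p => f (a, p.2) with hg
    have gmono : ∀ p q : B × X, p ≤ q → g p ≤ g q := by
      intro p q hpq
      exact fmono (a, p.2) (a, q.2) ⟨le_rfl, hpq.2⟩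
    set c : ℕ → B × X := fun n => g^[n] ⊥ with hc
    have cstep : ∀ n, c (n + 1) = g (c n) := by
      intro n
      simp [hc, Function.iterate_succ_apply']
    have cmono : Monotone c := by
      apply monotone_nat_of_le_succ
      intro n
      induction n with
      | zero => exact bot_le
      | succ n ih =>
        rw [cstep, cstep]
        exact gmono _ _ ih
    set D : Set (B × X) := Set.range c with hD
    have hDne : D.Nonempty := ⟨c 0, 0, rfl⟩
    have hDdir : DirectedOn (· ≤ ·) D := by
      rintro _ ⟨m, rfl⟩ _ ⟨n, rfl⟩
      exact ⟨c (max m n), ⟨max m n, rfl⟩, cmono (le_max_left m n),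
        cmono (le_max_right m n)⟩
    obtain ⟨s, hs⟩ := hBX D hDne hDdir
    -- g s is a lub of g '' D
    have hgD : IsLUB (g '' D) (g s) := by
      set D' : Set (A × X) := (fun p : B × X => (a, p.2)) '' D with hD'
      have hD'ne : D'.Nonempty := hDne.image _
      have hD'dir : DirectedOn (· ≤ ·) D' := by
        rintro _ ⟨p, hp, rfl⟩ _ ⟨q, hq, rfl⟩
        obtain ⟨r, hr, hpr, hqr⟩ := hDdir p hp q hq
        exact ⟨(a, r.2), ⟨r, hr, rfl⟩, ⟨le_rfl, hpr.2⟩, ⟨le_rfl, hqr.2⟩⟩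
      have hD'lub : IsLUB D' (a, s.2) := by
        constructor
        · rintro _ ⟨p, hp, rfl⟩
          exact ⟨le_rfl, (hs.1 hp).2⟩
        · intro w hw
          obtain ⟨p0, hp0⟩ := hDne
          refine ⟨(hw ⟨p0, hp0, rfl⟩).1, ?_⟩
          exact (my_lub_snd hs).2 (by rintro _ ⟨p, hp, rfl⟩; exact (hw ⟨p, hp, rfl⟩).2)
      have := hf D' hD'ne hD'dir (a, s.2) hD'lub
      have himg : f '' D' = g '' D := by
        rw [hD', Set.image_image]
      rw [himg] at this
      exact this
    -- but s is also a lub of g '' D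
    have hgD' : IsLUB (g '' D) s := by
      constructor
      · rintro _ ⟨p, ⟨n, rfl⟩, rfl⟩
        exact hs.1 ⟨n + 1, cstep n⟩
      · intro w hw
        refine hs.2 ?_
        rintro _ ⟨n, rfl⟩
        cases n with
        | zero => exact bot_le
        | succ n => rw [cstep]; exact hw ⟨c n, ⟨n, rfl⟩, rfl⟩
    have hfix : g s = s := hgD.unique hgD'
    -- F a' is an upper bound of D
    have hub : F a' ∈ upperBounds D := by
      rintro _ ⟨n, rfl⟩
      induction n with
      | zero => exact bot_le
      | succ n ih =>
        rw [cstep]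
        calc g (c n) = f (a, (c n).2) := rfl
          _ ≤ f (a', (F a').2) := fmono _ _ ⟨haa, ih.2⟩
          _ = F a' := (hF a').1
    exact le_trans ((hF a).2 (show f (a, s.2) = s from hfix)) (hs.2 hub)
  refine ⟨⟨fun a a' h => (Fmono a a' h).1, ?_⟩, ?_⟩
  · -- continuity of the trace
    intro D hne hdir u hu
    have FDdir : DirectedOn (· ≤ ·) (F '' D) := by
      rintro _ ⟨p, hp, rfl⟩ _ ⟨q, hq, rfl⟩
      obtain ⟨r, hr, hpr, hqr⟩ := hdir p hp q hq
      exact ⟨F r, ⟨r, hr, rfl⟩, Fmono p r hpr, Fmono q r hqr⟩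
    obtain ⟨s, hs⟩ := hBX (F '' D) (hne.image F) FDdir
    have hsle : s ≤ F u := hs.2 (by rintro _ ⟨a, ha, rfl⟩; exact Fmono a u (hu.1 ha))
    set E : Set (A × X) := (fun a : A => (a, (F a).2)) '' D with hE
    have hEne : E.Nonempty := hne.image _
    have hEdir : DirectedOn (· ≤ ·) E := by
      rintro _ ⟨p, hp, rfl⟩ _ ⟨q, hq, rfl⟩
      obtain ⟨r, hr, hpr, hqr⟩ := hdir p hp q hq
      exact ⟨(r, (F r).2), ⟨r, hr, rfl⟩, ⟨hpr, (Fmono p r hpr).2⟩,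
        ⟨hqr, (Fmono q r hqr).2⟩⟩
    have hElub : IsLUB E (u, s.2) := by
      constructor
      · rintro _ ⟨a, ha, rfl⟩
        exact ⟨hu.1 ha, (hs.1 ⟨a, ha, rfl⟩).2⟩
      · intro w hw
        refine ⟨hu.2 (fun a ha => (hw ⟨a, ha, rfl⟩).1), ?_⟩
        exact (my_lub_snd hs).2 (by
          rintro _ ⟨_, ⟨a, ha, rfl⟩, rfl⟩
          exact (hw ⟨a, ha, rfl⟩).2)
    have hcont := hf E hEne hEdir (u, s.2) hElub
    have himg : f '' E = F '' D := by
      rw [hE, Set.image_image]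
      apply Set.image_congr
      intro a _
      exact (hF a).1
    rw [himg] at hcont
    have hsfix : f (u, s.2) = s := hcont.unique hs
    have : s = F u := le_antisymm hsle ((hF u).2 hsfix)
    have hproj : (fun a => (F a).1) '' D = Prod.fst '' (F '' D) := by
      rw [Set.image_image]
    rw [hproj, ← this]
    exact my_lub_fst hs
  · -- yanking
    intro G hG a
    have h := (hG a).1
    simp only [Set.mem_setOf_eq, Prod.swap_prod_mk, Prod.ext_iff] at h
    exact h.1.symm.trans h.2.symm
end
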